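/- Under the hypotheses of the Pohozaev identity (Δu + A = τ with A ⊥ ∇u pointwise), integrating over t ∈ [0, δ] yields ∫_{D_δ} (|∂_r u|² - r^{-2}|∂_θ u|²) dx = ∫₀^δ (2/t) ∫_{D_t} τ · (x · ∇u) dx dt. -/

import Mathlib

/-!
Let `Φ = ‖∂₁u‖² - ‖∂₂u‖² + 2i⟪∂₁u, ∂₂u⟫` be the Hopf differential of `u` and `V = x̄ Φ`.
By the symmetry of second derivatives `div V = 2⟪Δu, x·∇u⟫`, and on the circle of radius `t`
the flux density `⟨V, x⟩` equals `t² (|∂_r u|² - r⁻²|∂_θ u|²)`. Since `A ⊥ ∇u` we have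
`⟪τ, x·∇u⟫ = ⟪Δu, x·∇u⟫`, so the divergence theorem on `D_t`, proved in polar coordinates,
turns `(2/t) ∫_{D_t} ⟪τ, x·∇u⟫` into `t ∫_{-π}^{π} (|∂_r u|² - r⁻²|∂_θ u|²)(t, θ) dθ`; integrating
over `t ∈ [0, δ]` gives the left-hand side written in polar coordinates.
-/

open Real MeasureTheory RealInnerProductSpace Set Metric

lemma Complex.polarCoord_symm_eq_circleMap :
    ⇑Complex.polarCoord.symm = fun p : ℝ × ℝ => circleMap 0 p.1 p.2 := by
  ext1 p
  simp [circleMap, Complex.exp_mul_I, ← Complex.ofReal_cos, ← Complex.ofReal_sin]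

lemma hasDerivAt_circleMap_radius (c : ℂ) (R θ : ℝ) :
    HasDerivAt (circleMap c · θ) (circleMap 0 1 θ) R := by
  simpa [circleMap] using
    ((Complex.ofRealCLM.hasDerivAt (x := R)).mul_const (Complex.exp (θ * Complex.I))).const_add c

lemma ContinuousLinearMap.apply_eq_re_smul_add_im_smul {E : Type*} [NormedAddCommGroup E]
    [NormedSpace ℝ E] (L : ℂ →L[ℝ] E) (z : ℂ) : L z = z.re • L 1 + z.im • L Complex.I := by
  have hz : z = z.re • (1 : ℂ) + z.im • Complex.I := by simp [Complex.real_smul]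
  conv_lhs => rw [hz]
  rw [map_add, map_smul, map_smul]

theorem integral_ball_eq_intervalIntegral_circleMap {E : Type*} [NormedAddCommGroup E]
    [NormedSpace ℝ E] (f : ℂ → E) {g : ℝ → ℝ → E} (hg : Continuous (Function.uncurry g))
    (hfg : ∀ r θ, 0 < r → g r θ = r • f (circleMap 0 r θ)) {t : ℝ} (ht : 0 ≤ t) :
    ∫ x in ball (0 : ℂ) t, f x = ∫ r in 0..t, ∫ θ in -π..π, g r θ := by
  set D : Set (ℝ × ℝ) := (fun p => circleMap 0 p.1 p.2) ⁻¹' ball 0 t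
  have hD : Complex.polarCoord.target ∩ D = Ioo 0 t ×ˢ Ioo (-π) π := by
    ext ⟨r, θ⟩
    simp only [D, Complex.polarCoord_target, mem_inter_iff, mem_prod, mem_preimage,
      mem_ball_zero_iff, norm_circleMap_zero, mem_Ioi, mem_Ioo]
    constructor
    · rintro ⟨⟨hr, hθ⟩, hrt⟩
      exact ⟨⟨hr, by rwa [abs_of_pos hr] at hrt⟩, hθ⟩
    · rintro ⟨⟨hr, hrt⟩, hθ⟩
      exact ⟨⟨hr, hθ⟩, by rwa [abs_of_pos hr]⟩
  have hint : IntegrableOn (Function.uncurry g) (Ioo 0 t ×ˢ Ioo (-π) π) :=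
    (hg.continuousOn.integrableOn_compact (isCompact_Icc.prod isCompact_Icc)).mono_set
      (prod_mono Ioo_subset_Icc_self Ioo_subset_Icc_self)
  calc ∫ x in ball (0 : ℂ) t, f x
      = ∫ p in Complex.polarCoord.target,
          D.indicator (fun p => p.1 • f (circleMap 0 p.1 p.2)) p := by
        rw [← integral_indicator measurableSet_ball, ← Complex.integral_comp_polarCoord_symm,
          Complex.polarCoord_symm_eq_circleMap]
        congr 1 with p
        by_cases hp : p ∈ D <;> simp_all [D]
    _ = ∫ p in Ioo 0 t ×ˢ Ioo (-π) π, Function.uncurry g p := by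
        rw [setIntegral_indicator (measurableSet_ball.preimage (by fun_prop)), hD]
        exact setIntegral_congr_fun (measurableSet_Ioo.prod measurableSet_Ioo) fun p hp =>
          (hfg p.1 p.2 hp.1.1).symm
    _ = ∫ r in 0..t, ∫ θ in -π..π, g r θ := by
        simp only [Measure.volume_eq_prod, setIntegral_prod _ hint,
          intervalIntegral.integral_of_le ht,
          intervalIntegral.integral_of_le (neg_le_self pi_pos.le),
          integral_Ioc_eq_integral_Ioo, Function.uncurry_apply_pair]

theorem intervalIntegral_intervalIntegral_deriv_add_deriv {W Z W' Z' : ℝ → ℝ → ℝ}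
    (hW : ∀ r θ, HasDerivAt (W · θ) (W' r θ) r) (hZ : ∀ r θ, HasDerivAt (Z r ·) (Z' r θ) θ)
    (hW' : Continuous (Function.uncurry W')) (hZ' : Continuous (Function.uncurry Z'))
    (a b c d : ℝ) :
    ∫ r in a..b, ∫ θ in c..d, (W' r θ + Z' r θ) =
      (∫ θ in c..d, (W b θ - W a θ)) + ∫ r in a..b, (Z r d - Z r c) := by
  have hW'r : ∀ r, Continuous (W' r) := fun r => hW'.comp (Continuous.prodMk_right r)
  have hW'θ : ∀ θ, Continuous (W' · θ) := fun θ => hW'.comp (Continuous.prodMk_left θ)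
  have hZ'r : ∀ r, Continuous (Z' r) := fun r => hZ'.comp (Continuous.prodMk_right r)
  simp_rw [intervalIntegral.integral_add ((hW'r _).intervalIntegrable _ _)
    ((hZ'r _).intervalIntegrable _ _)]
  have hIW := intervalIntegral.continuous_parametric_intervalIntegral_of_continuous'
    (μ := volume) hW' c d
  have hIZ := intervalIntegral.continuous_parametric_intervalIntegral_of_continuous'
    (μ := volume) hZ' c d
  rw [intervalIntegral.integral_add (hIW.intervalIntegrable _ _) (hIZ.intervalIntegrable _ _),
    intervalIntegral_intervalIntegral_swap
      ((hW'.continuousOn.integrableOn_compact (isCompact_uIcc.prod isCompact_uIcc)).mono_set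
        (prod_mono uIoc_subset_uIcc uIoc_subset_uIcc))]
  simp_rw [intervalIntegral.integral_eq_sub_of_hasDerivAt (fun r _ => hW r _)
      ((hW'θ _).intervalIntegrable _ _),
    intervalIntegral.integral_eq_sub_of_hasDerivAt (fun θ _ => hZ _ θ)
      ((hZ'r _).intervalIntegrable _ _)]

theorem integral_ball_divergence {V₁ V₂ : ℂ → ℝ} (h₁ : ContDiff ℝ 1 V₁) (h₂ : ContDiff ℝ 1 V₂)
    {t : ℝ} (ht : 0 ≤ t) :
    ∫ x in ball (0 : ℂ) t, (fderiv ℝ V₁ x 1 + fderiv ℝ V₂ x Complex.I) =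
      ∫ θ in -π..π, ((circleMap 0 t θ).re * V₁ (circleMap 0 t θ) +
        (circleMap 0 t θ).im * V₂ (circleMap 0 t θ)) := by
  have hV₁ := h₁.differentiable one_ne_zero
  have hV₂ := h₂.differentiable one_ne_zero
  -- In polar coordinates `r • div V = ∂_r W + ∂_θ Z`, and `Z` is `2π`-periodic in `θ`.
  set W : ℝ → ℝ → ℝ := fun r θ =>
    r * cos θ * V₁ (circleMap 0 r θ) + r * sin θ * V₂ (circleMap 0 r θ)
  set Z : ℝ → ℝ → ℝ := fun r θ => -sin θ * V₁ (circleMap 0 r θ) + cos θ * V₂ (circleMap 0 r θ)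
  set W' : ℝ → ℝ → ℝ := fun r θ => cos θ * V₁ (circleMap 0 r θ) + sin θ * V₂ (circleMap 0 r θ) +
    r * (cos θ * fderiv ℝ V₁ (circleMap 0 r θ) (circleMap 0 1 θ) +
      sin θ * fderiv ℝ V₂ (circleMap 0 r θ) (circleMap 0 1 θ))
  set Z' : ℝ → ℝ → ℝ := fun r θ =>
    -(cos θ * V₁ (circleMap 0 r θ) + sin θ * V₂ (circleMap 0 r θ)) +
      (-sin θ * fderiv ℝ V₁ (circleMap 0 r θ) (circleMap 0 r θ * Complex.I) +
        cos θ * fderiv ℝ V₂ (circleMap 0 r θ) (circleMap 0 r θ * Complex.I))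
  have hW : ∀ r θ, HasDerivAt (W · θ) (W' r θ) r := fun r θ =>
    (((hasDerivAt_mul_const (cos θ)).mul
        ((hV₁ _).hasFDerivAt.comp_hasDerivAt r (hasDerivAt_circleMap_radius 0 r θ))).add
      ((hasDerivAt_mul_const (sin θ)).mul
        ((hV₂ _).hasFDerivAt.comp_hasDerivAt r (hasDerivAt_circleMap_radius 0 r θ)))).congr_deriv
      (by simp only [W', Function.comp_apply]; ring)
  have hZ : ∀ r θ, HasDerivAt (Z r ·) (Z' r θ) θ := fun r θ =>
    (((hasDerivAt_sin θ).neg.mul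
        ((hV₁ _).hasFDerivAt.comp_hasDerivAt θ (hasDerivAt_circleMap 0 r θ))).add
      ((hasDerivAt_cos θ).mul
        ((hV₂ _).hasFDerivAt.comp_hasDerivAt θ (hasDerivAt_circleMap 0 r θ)))).congr_deriv
      (by simp only [Z', Function.comp_apply, Pi.neg_apply]; ring)
  have hdiv : ∀ r θ, W' r θ + Z' r θ =
      r • (fderiv ℝ V₁ (circleMap 0 r θ) 1 + fderiv ℝ V₂ (circleMap 0 r θ) Complex.I) := by
    intro r θ
    simp only [W', Z', ContinuousLinearMap.apply_eq_re_smul_add_im_smul _ (circleMap 0 1 θ),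
      ContinuousLinearMap.apply_eq_re_smul_add_im_smul _ (circleMap 0 r θ * Complex.I),
      Complex.mul_re, Complex.mul_im, circleMap_zero_re, circleMap_zero_im, Complex.I_re,
      Complex.I_im, smul_eq_mul]
    linear_combination (r * fderiv ℝ V₁ (circleMap 0 r θ) 1 +
      r * fderiv ℝ V₂ (circleMap 0 r θ) Complex.I) * sin_sq_add_cos_sq θ
  have := h₁.continuous_fderiv one_ne_zero
  have := h₂.continuous_fderiv one_ne_zero
  have := h₁.continuous
  have := h₂.continuous
  rw [integral_ball_eq_intervalIntegral_circleMap _ (by fun_prop) (fun r θ _ => hdiv r θ) ht,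
    intervalIntegral_intervalIntegral_deriv_add_deriv hW hZ (by fun_prop) (by fun_prop)]
  simp [W, Z, circleMap]

section Pohozaev

variable {E : Type*} [NormedAddCommGroup E] [InnerProductSpace ℝ E] {u : ℂ → E}

lemma fderiv_fderiv_apply_comm {F : Type*} [NormedAddCommGroup F] [NormedSpace ℝ F] {f : F → E}
    (hf : ContDiff ℝ 2 f) (x v w : F) :
    fderiv ℝ (fun y => fderiv ℝ f y v) x w = fderiv ℝ (fun y => fderiv ℝ f y w) x v := by
  have hDf : Differentiable ℝ (fderiv ℝ f) := (hf.fderiv_right le_rfl).differentiable one_ne_zero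
  simp only [fderiv_clm_apply (hDf x) (differentiableAt_const _), fderiv_fun_const, Pi.zero_apply,
    ContinuousLinearMap.comp_zero, zero_add, ContinuousLinearMap.flip_apply]
  exact (hf.contDiffAt.isSymmSndFDerivAt (by simp [minSmoothness_of_isRCLikeNormedField])) w v

/-- `pohozaevField₁ u + i pohozaevField₂ u = x̄ Φ`, where `Φ = ‖∂₁u‖² - ‖∂₂u‖² + 2i⟪∂₁u, ∂₂u⟫`
is the Hopf differential of `u`. -/
noncomputable def pohozaevField₁ (u : ℂ → E) (x : ℂ) : ℝ :=
  x.re * (‖fderiv ℝ u x 1‖ ^ 2 - ‖fderiv ℝ u x Complex.I‖ ^ 2) +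
    2 * x.im * ⟪fderiv ℝ u x 1, fderiv ℝ u x Complex.I⟫

noncomputable def pohozaevField₂ (u : ℂ → E) (x : ℂ) : ℝ :=
  2 * x.re * ⟪fderiv ℝ u x 1, fderiv ℝ u x Complex.I⟫ -
    x.im * (‖fderiv ℝ u x 1‖ ^ 2 - ‖fderiv ℝ u x Complex.I‖ ^ 2)

lemma contDiff_pohozaevField₁ (hu : ContDiff ℝ 2 u) : ContDiff ℝ 1 (pohozaevField₁ u) := by
  have hDu : ContDiff ℝ 1 (fderiv ℝ u) := hu.fderiv_right le_rfl
  have h₁ := hDu.clm_apply (contDiff_const (c := (1 : ℂ)))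
  have h₂ := hDu.clm_apply (contDiff_const (c := Complex.I))
  exact (Complex.reCLM.contDiff.mul ((h₁.norm_sq ℝ).sub (h₂.norm_sq ℝ))).add
    ((contDiff_const.mul Complex.imCLM.contDiff).mul (h₁.inner ℝ h₂))

lemma contDiff_pohozaevField₂ (hu : ContDiff ℝ 2 u) : ContDiff ℝ 1 (pohozaevField₂ u) := by
  have hDu : ContDiff ℝ 1 (fderiv ℝ u) := hu.fderiv_right le_rfl
  have h₁ := hDu.clm_apply (contDiff_const (c := (1 : ℂ)))
  have h₂ := hDu.clm_apply (contDiff_const (c := Complex.I))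
  exact ((contDiff_const.mul Complex.reCLM.contDiff).mul (h₁.inner ℝ h₂)).sub
    (Complex.imCLM.contDiff.mul ((h₁.norm_sq ℝ).sub (h₂.norm_sq ℝ)))

lemma fderiv_pohozaevField_add (hu : ContDiff ℝ 2 u) (x : ℂ) :
    fderiv ℝ (pohozaevField₁ u) x 1 + fderiv ℝ (pohozaevField₂ u) x Complex.I =
      2 * ⟪fderiv ℝ (fun y => fderiv ℝ u y 1) x 1 +
        fderiv ℝ (fun y => fderiv ℝ u y Complex.I) x Complex.I, fderiv ℝ u x x⟫ := by
  have hDu : ContDiff ℝ 1 (fderiv ℝ u) := hu.fderiv_right le_rfl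
  have hD (v : ℂ) :
      HasFDerivAt (fun y => fderiv ℝ u y v) (fderiv ℝ (fun y => fderiv ℝ u y v) x) x :=
    (((hDu.clm_apply contDiff_const).differentiable one_ne_zero) x).hasFDerivAt
  have hre := Complex.reCLM.hasFDerivAt (x := x)
  have him := Complex.imCLM.hasFDerivAt (x := x)
  have h₁ : HasFDerivAt (pohozaevField₁ u) _ x :=
    (hre.mul ((hD 1).norm_sq.sub (hD Complex.I).norm_sq)).add
      ((him.const_mul 2).mul ((hD 1).inner ℝ (hD Complex.I)))
  have h₂ : HasFDerivAt (pohozaevField₂ u) _ x :=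
    ((hre.const_mul 2).mul ((hD 1).inner ℝ (hD Complex.I))).sub
      (him.mul ((hD 1).norm_sq.sub (hD Complex.I).norm_sq))
  rw [h₁.fderiv, h₂.fderiv]
  simp only [Complex.reCLM_apply, Pi.sub_apply, Complex.imCLM_apply, add_apply, smul_apply,
    sub_apply, ContinuousLinearMap.comp_apply, coe_innerSL_apply, nsmul_eq_mul, Nat.cast_ofNat,
    smul_eq_mul, Complex.one_re, mul_one, ContinuousLinearMap.prod_apply, fderivInnerCLM_apply,
    Complex.one_im, mul_zero, add_zero, Complex.I_re, Complex.I_im]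
  rw [fderiv_fderiv_apply_comm hu x 1 Complex.I,
    ContinuousLinearMap.apply_eq_re_smul_add_im_smul (fderiv ℝ u x) x]
  simp only [inner_add_left, inner_add_right, real_inner_smul_right,
    real_inner_comm (fderiv ℝ u x 1), real_inner_comm (fderiv ℝ u x Complex.I)]
  ring

lemma pohozaevField_flux (u : ℂ → E) (x : ℂ) :
    x.re * pohozaevField₁ u x + x.im * pohozaevField₂ u x =
      ‖fderiv ℝ u x x‖ ^ 2 - ‖fderiv ℝ u x (Complex.I * x)‖ ^ 2 := by
  rw [ContinuousLinearMap.apply_eq_re_smul_add_im_smul (fderiv ℝ u x) x,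
    ContinuousLinearMap.apply_eq_re_smul_add_im_smul (fderiv ℝ u x) (Complex.I * x)]
  simp only [pohozaevField₁, pohozaevField₂, Complex.mul_re, Complex.mul_im, Complex.I_re,
    Complex.I_im, ← real_inner_self_eq_norm_sq, inner_add_left, inner_add_right,
    real_inner_smul_left, real_inner_smul_right, real_inner_comm (fderiv ℝ u x 1)]
  ring

/-- `|∂_r u|² - r⁻²|∂_θ u|²` at the point with polar coordinates `(r, θ)`. -/
noncomputable def radialMinusAngularEnergy (u : ℂ → E) (r θ : ℝ) : ℝ :=
  ‖fderiv ℝ u (circleMap 0 r θ) (circleMap 0 1 θ)‖ ^ 2 -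
    ‖fderiv ℝ u (circleMap 0 r θ) (Complex.I * circleMap 0 1 θ)‖ ^ 2

lemma continuous_radialMinusAngularEnergy (hu : ContDiff ℝ 1 u) :
    Continuous (Function.uncurry (radialMinusAngularEnergy u)) := by
  have := hu.continuous_fderiv one_ne_zero
  unfold radialMinusAngularEnergy
  fun_prop

lemma norm_sq_sub_norm_sq_circleMap (u : ℂ → E) (r θ : ℝ) :
    ‖fderiv ℝ u (circleMap 0 r θ) (circleMap 0 r θ)‖ ^ 2 -
        ‖fderiv ℝ u (circleMap 0 r θ) (Complex.I * circleMap 0 r θ)‖ ^ 2 =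
      r ^ 2 * radialMinusAngularEnergy u r θ := by
  have hr : circleMap 0 r θ = r • circleMap 0 1 θ := by simp [circleMap, Complex.real_smul]
  rw [hr, mul_smul_comm, map_smul, map_smul, norm_smul, norm_smul, radialMinusAngularEnergy, ← hr]
  simp only [Real.norm_eq_abs, mul_pow, sq_abs]
  ring

theorem pohozaev_identity (hu : ContDiff ℝ 2 u) {t : ℝ} (ht : 0 ≤ t) :
    2 * ∫ x in ball (0 : ℂ) t, ⟪fderiv ℝ (fun y => fderiv ℝ u y 1) x 1 +
        fderiv ℝ (fun y => fderiv ℝ u y Complex.I) x Complex.I, fderiv ℝ u x x⟫ =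
      t ^ 2 * ∫ θ in -π..π, radialMinusAngularEnergy u t θ := by
  rw [← integral_const_mul]
  simp_rw [← fderiv_pohozaevField_add hu]
  rw [integral_ball_divergence (contDiff_pohozaevField₁ hu) (contDiff_pohozaevField₂ hu) ht,
    ← intervalIntegral.integral_const_mul]
  simp_rw [pohozaevField_flux, norm_sq_sub_norm_sq_circleMap]

end Pohozaev

/-- Integrated Pohozaev identity: under `Δu + A = τ` with `A ⊥ ∇u` pointwise,
`∫_{D_δ} (|∂_r u|² - r⁻²|∂_θ u|²) dx = ∫₀^δ (2/t) ∫_{D_t} τ·(x·∇u) dx dt`. -/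
theorem stmt3 (K : ℕ) (u A τ : ℂ → EuclideanSpace ℝ (Fin K)) (δ : ℝ) (hδ : 0 < δ)
    (hu : ContDiff ℝ 2 u)
    (heq : ∀ x : ℂ,
      fderiv ℝ (fun y => fderiv ℝ u y 1) x 1
        + fderiv ℝ (fun y => fderiv ℝ u y Complex.I) x Complex.I + A x = τ x)
    (hperp : ∀ x : ℂ, ⟪A x, fderiv ℝ u x 1⟫ = 0 ∧ ⟪A x, fderiv ℝ u x Complex.I⟫ = 0) :
    (∫ x in Metric.ball (0:ℂ) δ,
        (‖fderiv ℝ u x x‖ ^ 2 - ‖fderiv ℝ u x (Complex.I * x)‖ ^ 2) / ‖x‖ ^ 2)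
      = ∫ t in (0:ℝ)..δ, (2 / t) * ∫ x in Metric.ball (0:ℂ) t, ⟪τ x, fderiv ℝ u x x⟫ := by
  have hτ (x : ℂ) : ⟪τ x, fderiv ℝ u x x⟫ = ⟪fderiv ℝ (fun y => fderiv ℝ u y 1) x 1 +
      fderiv ℝ (fun y => fderiv ℝ u y Complex.I) x Complex.I, fderiv ℝ u x x⟫ := by
    rw [← heq x, inner_add_left, ContinuousLinearMap.apply_eq_re_smul_add_im_smul (fderiv ℝ u x) x,
      inner_add_right (A x), real_inner_smul_right, real_inner_smul_right, (hperp x).1,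
      (hperp x).2]
    ring
  have hslice : ∀ t ∈ uIcc 0 δ, (2 / t) * ∫ x in ball (0 : ℂ) t, ⟪τ x, fderiv ℝ u x x⟫ =
      t * ∫ θ in -π..π, radialMinusAngularEnergy u t θ := by
    intro t ht
    rw [uIcc_of_le hδ.le] at ht
    rcases ht.1.eq_or_lt with rfl | ht₀
    · simp
    · simp_rw [hτ, div_mul_eq_mul_div, pohozaev_identity hu ht.1]
      field_simp
  rw [intervalIntegral.integral_congr hslice,
    integral_ball_eq_intervalIntegral_circleMap _
      (g := fun r θ => r * radialMinusAngularEnergy u r θ)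
      (continuous_fst.mul (continuous_radialMinusAngularEnergy (hu.of_le one_le_two))) ?_ hδ.le]
  · simp_rw [intervalIntegral.integral_const_mul]
  · intro r θ hr
    rw [smul_eq_mul, norm_circleMap_zero, abs_of_pos hr, norm_sq_sub_norm_sq_circleMap]
    field_simp
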